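/- Consider the generalized fair learning problem: minimize E_{(x,s)∼P_{X,S}}[ TV(Q_{Ŷ|X=x,S=s}, P_{Y|X=x,S=s}) ] over conditional distributions Q_{Ŷ|X,S} subject to ρ_TV(Ŷ, S) ≤ ε, where ρ_TV(Ŷ, S) = E_{s∼P_S}[ TV(P_{Ŷ|S=s}, P_{Ŷ}) ] and Ŷ is distributed according to Q_{Ŷ|X,S} · P_{X,S}. Suppose s_max ∈ 𝒮 satisfies P_S(s_max) = 1/2 + δ for some δ > 0, and there exist functions φ_L, φ_U : 𝒳 × 𝒴 → ℝ such that φ_L(x,y) ≤ P(X=x | Y=y, S=s) / P(X=x | S=s) ≤ φ_U(x,y) for all x ∈ 𝒳, y ∈ 𝒴, s ∈ 𝒮. Define Δ(x,y) = φ_U(x,y) − φ_L(x,y), and assume ε/2 ≥ E_{x∼P_X, y∼P_{Y|S=s_max}}[Δ(x,y)] (expectation under the product of the marginal of X and the conditional of Y given S=s_max). Then for any optimal solution Q*, the induced Ŷ satisfies: E_{s∼P_S}[ TV(P_{Ŷ|S=s}, P_{Y|S=s_max}) ] ≤ 2ε · (1 + 1/(2δ)). -/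

import Mathlib

open Finset

noncomputable section

variable {𝒳 𝒴 𝒮 : Type*} [Fintype 𝒳] [Fintype 𝒴] [Fintype 𝒮]

/-- Total variation distance between two finitely supported distributions on `𝒴`,
`TV(p, q) = (1/2) ∑ y, |p y - q y|`. -/
def TV (p q : 𝒴 → ℝ) : ℝ := (1 / 2) * ∑ y, |p y - q y|

/-- Marginal distribution of `(X, S)` under the joint `P` of `(X, Y, S)`. -/
def margXS (P : 𝒳 → 𝒴 → 𝒮 → ℝ) (x : 𝒳) (s : 𝒮) : ℝ := ∑ y, P x y s

/-- Marginal distribution of `(Y, S)`. -/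
def margYS (P : 𝒳 → 𝒴 → 𝒮 → ℝ) (y : 𝒴) (s : 𝒮) : ℝ := ∑ x, P x y s

/-- Marginal distribution of `S`. -/
def margS (P : 𝒳 → 𝒴 → 𝒮 → ℝ) (s : 𝒮) : ℝ := ∑ x, margXS P x s

/-- Marginal distribution of `X`. -/
def margX (P : 𝒳 → 𝒴 → 𝒮 → ℝ) (x : 𝒳) : ℝ := ∑ s, margXS P x s

/-- Conditional distribution of `Y` given `X = x, S = s`. -/
def condYXS (P : 𝒳 → 𝒴 → 𝒮 → ℝ) (x : 𝒳) (s : 𝒮) (y : 𝒴) : ℝ := P x y s / margXS P x s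

/-- Conditional distribution of `Y` given `S = s`. -/
def condYS (P : 𝒳 → 𝒴 → 𝒮 → ℝ) (s : 𝒮) (y : 𝒴) : ℝ := margYS P y s / margS P s

/-- The ratio `P(X=x | Y=y, S=s) / P(X=x | S=s)`. -/
def condRatio (P : 𝒳 → 𝒴 → 𝒮 → ℝ) (x : 𝒳) (y : 𝒴) (s : 𝒮) : ℝ :=
  (P x y s / margYS P y s) / (margXS P x s / margS P s)

/-- A conditional distribution `Q`: for every `(x, s)`, `Q x s` is a probability
distribution on labels. -/
def IsRule (Q : 𝒳 → 𝒮 → 𝒴 → ℝ) : Prop :=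
  (∀ x s y, 0 ≤ Q x s y) ∧ ∀ x s, ∑ y, Q x s y = 1

/-- The generalized objective: `E_{(x,s)∼P_{X,S}}[TV(Q_{Ŷ|X=x,S=s}, P_{Y|X=x,S=s})]`. -/
def objective (P : 𝒳 → 𝒴 → 𝒮 → ℝ) (Q : 𝒳 → 𝒮 → 𝒴 → ℝ) : ℝ :=
  ∑ x, ∑ s, margXS P x s * TV (Q x s) (condYXS P x s)

/-- Joint distribution of `(Ŷ, S)` induced by `Q · P_{X,S}`. -/
def jointYhatS (P : 𝒳 → 𝒴 → 𝒮 → ℝ) (Q : 𝒳 → 𝒮 → 𝒴 → ℝ) (yh : 𝒴) (s : 𝒮) : ℝ :=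
  ∑ x, margXS P x s * Q x s yh

/-- Marginal distribution of the prediction `Ŷ`. -/
def margYhat (P : 𝒳 → 𝒴 → 𝒮 → ℝ) (Q : 𝒳 → 𝒮 → 𝒴 → ℝ) (yh : 𝒴) : ℝ :=
  ∑ s, jointYhatS P Q yh s

/-- Conditional distribution of the prediction `Ŷ` given `S = s`. -/
def condYhatS (P : 𝒳 → 𝒴 → 𝒮 → ℝ) (Q : 𝒳 → 𝒮 → 𝒴 → ℝ) (s : 𝒮) (yh : 𝒴) : ℝ :=
  jointYhatS P Q yh s / margS P s

/-- The TV-based dependence measure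
`ρ_TV(Ŷ, S) = E_{s∼P_S}[TV(P_{Ŷ|S=s}, P_Ŷ)]`. -/
def rhoTV (P : 𝒳 → 𝒴 → 𝒮 → ℝ) (Q : 𝒳 → 𝒮 → 𝒴 → ℝ) : ℝ :=
  ∑ s, margS P s * TV (condYhatS P Q s) (margYhat P Q)

/-! The witness `tiltRule P s_max` reweights `P_{Y|S=s_max}` by `P(x|y,s)/P(x|s)` and
normalises. Before normalisation its group-wise prediction law is exactly `P_{Y|S=s_max}` and
its objective is `B = E_s TV(P_{Y|S=s}, P_{Y|S=s_max})`; normalising costs at most `Δ/2` pointwise,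
so it is feasible with objective at most `B + ε/4`. For any rule, the objective is at least
`B - L + 2 P_S(s_max) T`, where `L` is the quantity to bound and
`T = TV(P_{Ŷ|S=s_max}, P_{Y|S=s_max})`, while fairness gives `L ≤ ε + T`. Optimality thus forces
`2δ T ≤ 5ε/4`, hence `L ≤ ε + T ≤ 2ε(1 + 1/(2δ))`. -/

lemma TV_nonneg (p q : 𝒴 → ℝ) : 0 ≤ TV p q := by
  unfold TV; positivity

lemma TV_self (p : 𝒴 → ℝ) : TV p p = 0 := by simp [TV]

lemma TV_comm (p q : 𝒴 → ℝ) : TV p q = TV q p := by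
  simp only [TV, abs_sub_comm]

lemma TV_triangle (p q r : 𝒴 → ℝ) : TV p r ≤ TV p q + TV q r := by
  unfold TV
  have := sum_le_sum fun y (_ : y ∈ univ) => abs_sub_le (p y) (q y) (r y)
  rw [sum_add_distrib] at this
  linarith

lemma TV_const_mul {a : ℝ} (ha : 0 ≤ a) (p q : 𝒴 → ℝ) :
    TV (fun y => a * p y) (fun y => a * q y) = a * TV p q := by
  simp only [TV, ← mul_sub, abs_mul, abs_of_nonneg ha, ← mul_sum]
  ring

lemma TV_sum_mul_le {ι : Type*} [Fintype ι] {w : ι → ℝ} (hw : ∀ i, 0 ≤ w i)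
    (p q : ι → 𝒴 → ℝ) :
    TV (fun y => ∑ i, w i * p i y) (fun y => ∑ i, w i * q i y) ≤ ∑ i, w i * TV (p i) (q i) := by
  have hpt : ∀ y, |∑ i, w i * p i y - ∑ i, w i * q i y| ≤ ∑ i, w i * |p i y - q i y| := by
    intro y
    rw [← sum_sub_distrib]
    refine (abs_sum_le_sum_abs _ _).trans (le_of_eq (sum_congr rfl fun i _ => ?_))
    rw [← mul_sub, abs_mul, abs_of_nonneg (hw i)]
  calc TV (fun y => ∑ i, w i * p i y) (fun y => ∑ i, w i * q i y)
      ≤ 1 / 2 * ∑ y, ∑ i, w i * |p i y - q i y| := by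
        unfold TV; gcongr with y; exact hpt y
    _ = ∑ i, w i * TV (p i) (q i) := by
        simp only [TV, sum_comm (γ := 𝒴), mul_sum]
        exact sum_congr rfl fun i _ => sum_congr rfl fun y _ => by ring

lemma TV_div_sum_self {q : 𝒴 → ℝ} (hq : ∀ y, 0 ≤ q y) (hc : 0 < ∑ y, q y) :
    TV (fun y => q y / ∑ y', q y') q = |∑ y, q y - 1| / 2 := by
  have hpt : ∀ y, |q y / ∑ y', q y' - q y| = q y * (|∑ y', q y' - 1| / ∑ y', q y') := fun y => by
    rw [show q y / ∑ y', q y' - q y = q y * ((1 - ∑ y', q y') / ∑ y', q y') by field_simp,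
      abs_mul, abs_div, abs_of_nonneg (hq y), abs_of_pos hc, abs_sub_comm]
  simp only [TV, hpt, ← sum_mul]
  field_simp

/-- Averaging the triangle inequality `TV(u i, g) ≤ TV(u i, m) + TV(m, u i₀) + TV(u i₀, g)`
over `i ≠ i₀` loses nothing once `i₀` carries at least half of the weight. -/
lemma sum_mul_TV_le_sum_mul_TV_add {ι : Type*} [Fintype ι] [DecidableEq ι] {w : ι → ℝ}
    (hw : ∀ i, 0 ≤ w i) (hw1 : ∑ i, w i = 1) {i₀ : ι} (hi₀ : 1 / 2 ≤ w i₀)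
    (u : ι → 𝒴 → ℝ) (m g : 𝒴 → ℝ) :
    ∑ i, w i * TV (u i) g ≤ ∑ i, w i * TV (u i) m + TV (u i₀) g := by
  have hpt : ∀ i, w i * TV (u i) g ≤ w i * TV (u i) m + w i * (TV (u i₀) m + TV (u i₀) g)
      - if i = i₀ then 2 * w i₀ * TV (u i₀) m else 0 := by
    intro i
    split_ifs with h
    · subst h; linarith
    · have hm : TV m g ≤ TV (u i₀) m + TV (u i₀) g := TV_comm m (u i₀) ▸ TV_triangle m (u i₀) g
      have := mul_le_mul_of_nonneg_left ((TV_triangle (u i) m g).trans (add_le_add_right hm _))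
        (hw i)
      linarith
  calc ∑ i, w i * TV (u i) g
      ≤ ∑ i, (w i * TV (u i) m + w i * (TV (u i₀) m + TV (u i₀) g)
          - if i = i₀ then 2 * w i₀ * TV (u i₀) m else 0) :=
        sum_le_sum fun i _ => hpt i
    _ = ∑ i, w i * TV (u i) m + (TV (u i₀) m + TV (u i₀) g) - 2 * w i₀ * TV (u i₀) m := by
        rw [sum_sub_distrib, sum_add_distrib, ← sum_mul, hw1, sum_ite_eq', if_pos (mem_univ _),
          one_mul]
    _ ≤ ∑ i, w i * TV (u i) m + TV (u i₀) g := by nlinarith [TV_nonneg (u i₀) m]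

lemma sum_mul_TV_add_two_mul_TV_le {ι : Type*} [Fintype ι] [DecidableEq ι] {w : ι → ℝ}
    (hw : ∀ i, 0 ≤ w i) (u v : ι → 𝒴 → ℝ) (i₀ : ι) :
    ∑ i, w i * TV (v i) (v i₀) + 2 * w i₀ * TV (u i₀) (v i₀)
      ≤ ∑ i, w i * TV (u i) (v i) + ∑ i, w i * TV (u i) (v i₀) := by
  have hpt : ∀ i, w i * TV (v i) (v i₀) + (if i = i₀ then 2 * w i₀ * TV (u i₀) (v i₀) else 0)
      ≤ w i * TV (u i) (v i) + w i * TV (u i) (v i₀) := by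
    intro i
    split_ifs with h
    · subst h; rw [TV_self]; linarith
    · have := mul_le_mul_of_nonneg_left
        (TV_comm (v i) (u i) ▸ TV_triangle (v i) (u i) (v i₀)) (hw i)
      linarith
  have := sum_le_sum fun i (_ : i ∈ univ) => hpt i
  rwa [sum_add_distrib, sum_add_distrib, sum_ite_eq', if_pos (mem_univ _)] at this

lemma sum_mul_TV_sum_mul_le {ι : Type*} [Fintype ι] {w : ι → ℝ} (hw : ∀ i, 0 ≤ w i)
    (hw1 : ∑ i, w i = 1) (u : ι → 𝒴 → ℝ) (g : 𝒴 → ℝ) :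
    ∑ i, w i * TV (u i) (fun y => ∑ j, w j * u j y) ≤ 2 * ∑ i, w i * TV (u i) g := by
  have hmix : TV (fun y => ∑ j, w j * u j y) g ≤ ∑ j, w j * TV (u j) g := by
    simpa only [← sum_mul, hw1, one_mul] using TV_sum_mul_le hw u fun _ => g
  calc ∑ i, w i * TV (u i) (fun y => ∑ j, w j * u j y)
      ≤ ∑ i, w i * (TV (u i) g + TV g (fun y => ∑ j, w j * u j y)) :=
        sum_le_sum fun i _ => mul_le_mul_of_nonneg_left (TV_triangle _ _ _) (hw i)
    _ = ∑ i, w i * TV (u i) g + TV (fun y => ∑ j, w j * u j y) g := by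
        simp only [mul_add, sum_add_distrib, ← sum_mul, hw1, one_mul, TV_comm g]
    _ ≤ 2 * ∑ i, w i * TV (u i) g := by linarith

section Marginals

variable {P : 𝒳 → 𝒴 → 𝒮 → ℝ}

lemma margS_pos (hXS : ∀ x s, 0 < margXS P x s) (x : 𝒳) (s : 𝒮) : 0 < margS P s :=
  sum_pos (fun x' _ => hXS x' s) ⟨x, mem_univ x⟩

lemma sum_margS (hP1 : ∑ x, ∑ y, ∑ s, P x y s = 1) : ∑ s, margS P s = 1 := by
  rw [← hP1]
  simp only [margS, margXS]
  rw [sum_comm]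
  exact sum_congr rfl fun x _ => sum_comm

lemma condYS_nonneg (hP0 : ∀ x y s, 0 ≤ P x y s) (s : 𝒮) (y : 𝒴) : 0 ≤ condYS P s y :=
  div_nonneg (sum_nonneg fun x _ => hP0 x y s)
    (sum_nonneg fun x _ => sum_nonneg fun y' _ => hP0 x y' s)

lemma condRatio_nonneg (hP0 : ∀ x y s, 0 ≤ P x y s) (x : 𝒳) (y : 𝒴) (s : 𝒮) :
    0 ≤ condRatio P x y s :=
  div_nonneg (div_nonneg (hP0 x y s) (sum_nonneg fun x' _ => hP0 x' y s))
    (div_nonneg (sum_nonneg fun y' _ => hP0 x y' s)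
      (sum_nonneg fun x' _ => sum_nonneg fun y' _ => hP0 x' y' s))

lemma sum_condYXS (hXS : ∀ x s, 0 < margXS P x s) (x : 𝒳) (s : 𝒮) :
    ∑ y, condYXS P x s y = 1 := by
  simp only [condYXS, ← sum_div]
  exact div_self (hXS x s).ne'

lemma margS_mul_condYS {s : 𝒮} (hs : 0 < margS P s) (y : 𝒴) :
    margS P s * condYS P s y = margYS P y s :=
  mul_div_cancel₀ _ hs.ne'

lemma sum_margXS_mul_condYXS (hXS : ∀ x s, 0 < margXS P x s) (s : 𝒮) (y : 𝒴) :
    ∑ x, margXS P x s * condYXS P x s y = margYS P y s :=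
  sum_congr rfl fun x _ => mul_div_cancel₀ _ (hXS x s).ne'

lemma condYS_mul_condRatio (hXS : ∀ x s, 0 < margXS P x s) (hYS : ∀ y s, 0 < margYS P y s)
    (x : 𝒳) (y : 𝒴) (s : 𝒮) : condYS P s y * condRatio P x y s = condYXS P x s y := by
  have := (margS_pos hXS x s).ne'
  have := (hXS x s).ne'
  have := (hYS y s).ne'
  unfold condYS condRatio condYXS
  field_simp

lemma sum_condYS_mul_condRatio (hXS : ∀ x s, 0 < margXS P x s)
    (hYS : ∀ y s, 0 < margYS P y s) (x : 𝒳) (s : 𝒮) :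
    ∑ y, condYS P s y * condRatio P x y s = 1 := by
  simp only [condYS_mul_condRatio hXS hYS, sum_condYXS hXS]

lemma sum_margXS_mul_condRatio (hXS : ∀ x s, 0 < margXS P x s)
    (hYS : ∀ y s, 0 < margYS P y s) (y : 𝒴) {s : 𝒮} (hs : 0 < margS P s) :
    ∑ x, margXS P x s * condRatio P x y s = margS P s := by
  have hpt : ∀ x, margXS P x s * condRatio P x y s = P x y s * (margS P s / margYS P y s) := by
    intro x
    have := (hXS x s).ne'
    unfold condRatio
    field_simp
  rw [sum_congr rfl fun x _ => hpt x, ← sum_mul]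
  exact mul_div_cancel₀ _ (hYS y s).ne'

end Marginals

section Prediction

variable {P : 𝒳 → 𝒴 → 𝒮 → ℝ}

lemma margS_mul_condYhatS {s : 𝒮} (hs : 0 < margS P s) (Q : 𝒳 → 𝒮 → 𝒴 → ℝ) (y : 𝒴) :
    margS P s * condYhatS P Q s y = jointYhatS P Q y s :=
  mul_div_cancel₀ _ hs.ne'

lemma margYhat_eq_sum (hS : ∀ s, 0 < margS P s) (Q : 𝒳 → 𝒮 → 𝒴 → ℝ) :
    margYhat P Q = fun y => ∑ s, margS P s * condYhatS P Q s y := by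
  funext y
  simp only [margYhat, margS_mul_condYhatS (hS _)]

lemma rhoTV_le_two_mul (hS : ∀ s, 0 < margS P s) (hS1 : ∑ s, margS P s = 1)
    (Q : 𝒳 → 𝒮 → 𝒴 → ℝ) (g : 𝒴 → ℝ) :
    rhoTV P Q ≤ 2 * ∑ s, margS P s * TV (condYhatS P Q s) g := by
  rw [rhoTV, margYhat_eq_sum hS]
  exact sum_mul_TV_sum_mul_le (fun s => (hS s).le) hS1 _ g

lemma margS_mul_TV_condYhatS_le (hXS : ∀ x s, 0 < margXS P x s) {s : 𝒮}
    (hs : 0 < margS P s) (Q : 𝒳 → 𝒮 → 𝒴 → ℝ) {q : 𝒳 → 𝒴 → ℝ} {g : 𝒴 → ℝ}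
    (hq : ∀ y, ∑ x, margXS P x s * q x y = margS P s * g y) :
    margS P s * TV (condYhatS P Q s) g ≤ ∑ x, margXS P x s * TV (Q x s) (q x) := by
  rw [← TV_const_mul hs.le]
  simp only [margS_mul_condYhatS hs, ← hq]
  exact TV_sum_mul_le (fun x => (hXS x s).le) (fun x => Q x s) q

lemma sum_margS_mul_TV_condYhatS_condYS_le_objective (hXS : ∀ x s, 0 < margXS P x s)
    (hS : ∀ s, 0 < margS P s) (Q : 𝒳 → 𝒮 → 𝒴 → ℝ) :
    ∑ s, margS P s * TV (condYhatS P Q s) (condYS P s) ≤ objective P Q := by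
  rw [objective, sum_comm]
  exact sum_le_sum fun s _ => margS_mul_TV_condYhatS_le hXS (hS s) Q fun y => by
    rw [sum_margXS_mul_condYXS hXS, margS_mul_condYS (hS s)]

end Prediction

section Tilt

def tilt (P : 𝒳 → 𝒴 → 𝒮 → ℝ) (s₀ : 𝒮) (x : 𝒳) (s : 𝒮) (y : 𝒴) : ℝ :=
  condYS P s₀ y * condRatio P x y s

def tiltRule (P : 𝒳 → 𝒴 → 𝒮 → ℝ) (s₀ : 𝒮) (x : 𝒳) (s : 𝒮) (y : 𝒴) : ℝ :=
  tilt P s₀ x s y / ∑ y', tilt P s₀ x s y'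

variable {P : 𝒳 → 𝒴 → 𝒮 → ℝ}

lemma tilt_nonneg (hP0 : ∀ x y s, 0 ≤ P x y s) (s₀ : 𝒮) (x : 𝒳) (s : 𝒮) (y : 𝒴) :
    0 ≤ tilt P s₀ x s y :=
  mul_nonneg (condYS_nonneg hP0 s₀ y) (condRatio_nonneg hP0 x y s)

lemma sum_tilt_pos (hP0 : ∀ x y s, 0 ≤ P x y s) (hXS : ∀ x s, 0 < margXS P x s)
    (hYS : ∀ y s, 0 < margYS P y s) (s₀ : 𝒮) (x : 𝒳) (s : 𝒮) :
    0 < ∑ y, tilt P s₀ x s y := by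
  obtain ⟨y, -, hy⟩ := exists_ne_zero_of_sum_ne_zero
    ((sum_condYS_mul_condRatio hXS hYS x s).trans_ne one_ne_zero)
  have hr : 0 < condRatio P x y s :=
    (condRatio_nonneg hP0 x y s).lt_of_ne' (right_ne_zero_of_mul hy)
  have hc : 0 < condYS P s₀ y := div_pos (hYS y s₀) (margS_pos hXS x s₀)
  exact sum_pos' (fun y _ => tilt_nonneg hP0 s₀ x s y) ⟨y, mem_univ y, mul_pos hc hr⟩

lemma tiltRule_isRule (hP0 : ∀ x y s, 0 ≤ P x y s) (hXS : ∀ x s, 0 < margXS P x s)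
    (hYS : ∀ y s, 0 < margYS P y s) (s₀ : 𝒮) : IsRule (tiltRule P s₀) :=
  ⟨fun x s y => div_nonneg (tilt_nonneg hP0 s₀ x s y) (sum_tilt_pos hP0 hXS hYS s₀ x s).le,
    fun x s => by
      simp only [tiltRule, ← sum_div]
      exact div_self (sum_tilt_pos hP0 hXS hYS s₀ x s).ne'⟩

lemma abs_sum_tilt_sub_one_le (hP0 : ∀ x y s, 0 ≤ P x y s) (hXS : ∀ x s, 0 < margXS P x s)
    (hYS : ∀ y s, 0 < margYS P y s) {φL φU : 𝒳 → 𝒴 → ℝ}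
    (hL : ∀ x y s, φL x y ≤ condRatio P x y s) (hU : ∀ x y s, condRatio P x y s ≤ φU x y)
    (s₀ : 𝒮) (x : 𝒳) (s : 𝒮) :
    |∑ y, tilt P s₀ x s y - 1| ≤ ∑ y, condYS P s₀ y * (φU x y - φL x y) := by
  rw [← sum_condYS_mul_condRatio hXS hYS x s₀]
  simp only [tilt, ← sum_sub_distrib, ← mul_sub]
  refine (abs_sum_le_sum_abs _ _).trans (sum_le_sum fun y _ => ?_)
  rw [abs_mul, abs_of_nonneg (condYS_nonneg hP0 s₀ y)]
  refine mul_le_mul_of_nonneg_left (abs_sub_le_iff.2 ⟨?_, ?_⟩) (condYS_nonneg hP0 s₀ y)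
  · linarith [hU x y s, hL x y s₀]
  · linarith [hU x y s₀, hL x y s]

lemma sum_margXS_mul_tilt (hXS : ∀ x s, 0 < margXS P x s) (hYS : ∀ y s, 0 < margYS P y s)
    (s₀ : 𝒮) {s : 𝒮} (hs : 0 < margS P s) (y : 𝒴) :
    ∑ x, margXS P x s * tilt P s₀ x s y = margS P s * condYS P s₀ y := by
  simp only [tilt, mul_left_comm (margXS P _ s), ← mul_sum,
    sum_margXS_mul_condRatio hXS hYS y hs]
  ring

lemma sum_margXS_mul_TV_tiltRule_tilt_le (hP0 : ∀ x y s, 0 ≤ P x y s)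
    (hXS : ∀ x s, 0 < margXS P x s) (hYS : ∀ y s, 0 < margYS P y s) {φL φU : 𝒳 → 𝒴 → ℝ}
    (hL : ∀ x y s, φL x y ≤ condRatio P x y s) (hU : ∀ x y s, condRatio P x y s ≤ φU x y)
    (s₀ : 𝒮) :
    ∑ s, ∑ x, margXS P x s * TV (tiltRule P s₀ x s) (tilt P s₀ x s)
      ≤ (∑ x, ∑ y, margX P x * condYS P s₀ y * (φU x y - φL x y)) / 2 := by
  have hpt : ∀ x s, TV (tiltRule P s₀ x s) (tilt P s₀ x s)
      ≤ (∑ y, condYS P s₀ y * (φU x y - φL x y)) / 2 := fun x s => by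
    unfold tiltRule
    rw [TV_div_sum_self (tilt_nonneg hP0 s₀ x s) (sum_tilt_pos hP0 hXS hYS s₀ x s)]
    linarith [abs_sum_tilt_sub_one_le hP0 hXS hYS hL hU s₀ x s]
  calc ∑ s, ∑ x, margXS P x s * TV (tiltRule P s₀ x s) (tilt P s₀ x s)
      ≤ ∑ s, ∑ x, margXS P x s * ((∑ y, condYS P s₀ y * (φU x y - φL x y)) / 2) :=
        sum_le_sum fun s _ => sum_le_sum fun x _ =>
          mul_le_mul_of_nonneg_left (hpt x s) (hXS x s).le
    _ = ∑ x, margX P x * ((∑ y, condYS P s₀ y * (φU x y - φL x y)) / 2) := by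
        rw [sum_comm]
        simp only [← sum_mul]
        rfl
    _ = (∑ x, ∑ y, margX P x * condYS P s₀ y * (φU x y - φL x y)) / 2 := by
        simp only [mul_div_assoc', mul_sum, sum_div, mul_assoc]

lemma sum_margXS_mul_TV_tilt_condYXS (hP0 : ∀ x y s, 0 ≤ P x y s)
    (hXS : ∀ x s, 0 < margXS P x s) (hYS : ∀ y s, 0 < margYS P y s) (s₀ : 𝒮) {s : 𝒮}
    (hs : 0 < margS P s) :
    ∑ x, margXS P x s * TV (tilt P s₀ x s) (condYXS P x s)
      = margS P s * TV (condYS P s) (condYS P s₀) := by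
  have hpt : ∀ x y, |tilt P s₀ x s y - condYXS P x s y|
      = condRatio P x y s * |condYS P s y - condYS P s₀ y| := fun x y => by
    rw [tilt, ← condYS_mul_condRatio hXS hYS, ← sub_mul, abs_mul,
      abs_of_nonneg (condRatio_nonneg hP0 x y s), abs_sub_comm, mul_comm]
  simp only [TV, hpt, mul_sum, sum_comm (γ := 𝒳)]
  refine sum_congr rfl fun y _ => ?_
  rw [← sum_margXS_mul_condRatio hXS hYS y hs, sum_mul]
  exact sum_congr rfl fun x _ => by ring

lemma sum_margS_mul_TV_condYhatS_tiltRule_le (hP0 : ∀ x y s, 0 ≤ P x y s)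
    (hXS : ∀ x s, 0 < margXS P x s) (hYS : ∀ y s, 0 < margYS P y s)
    (hS : ∀ s, 0 < margS P s) {φL φU : 𝒳 → 𝒴 → ℝ}
    (hL : ∀ x y s, φL x y ≤ condRatio P x y s) (hU : ∀ x y s, condRatio P x y s ≤ φU x y)
    (s₀ : 𝒮) :
    ∑ s, margS P s * TV (condYhatS P (tiltRule P s₀) s) (condYS P s₀)
      ≤ (∑ x, ∑ y, margX P x * condYS P s₀ y * (φU x y - φL x y)) / 2 :=
  (sum_le_sum fun s _ => margS_mul_TV_condYhatS_le hXS (hS s) _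
    (sum_margXS_mul_tilt hXS hYS s₀ (hS s))).trans
    (sum_margXS_mul_TV_tiltRule_tilt_le hP0 hXS hYS hL hU s₀)

lemma objective_tiltRule_le (hP0 : ∀ x y s, 0 ≤ P x y s)
    (hXS : ∀ x s, 0 < margXS P x s) (hYS : ∀ y s, 0 < margYS P y s)
    (hS : ∀ s, 0 < margS P s) {φL φU : 𝒳 → 𝒴 → ℝ}
    (hL : ∀ x y s, φL x y ≤ condRatio P x y s) (hU : ∀ x y s, condRatio P x y s ≤ φU x y)
    (s₀ : 𝒮) :
    objective P (tiltRule P s₀) ≤ ∑ s, margS P s * TV (condYS P s) (condYS P s₀)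
      + (∑ x, ∑ y, margX P x * condYS P s₀ y * (φU x y - φL x y)) / 2 := by
  calc objective P (tiltRule P s₀)
      ≤ ∑ s, ∑ x, margXS P x s * (TV (tilt P s₀ x s) (condYXS P x s)
          + TV (tiltRule P s₀ x s) (tilt P s₀ x s)) := by
        rw [objective, sum_comm]
        refine sum_le_sum fun s _ => sum_le_sum fun x _ => mul_le_mul_of_nonneg_left ?_ (hXS x s).le
        linarith [TV_triangle (tiltRule P s₀ x s) (tilt P s₀ x s) (condYXS P x s)]
    _ = ∑ s, margS P s * TV (condYS P s) (condYS P s₀)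
          + ∑ s, ∑ x, margXS P x s * TV (tiltRule P s₀ x s) (tilt P s₀ x s) := by
        simp only [mul_add, sum_add_distrib, sum_margXS_mul_TV_tilt_condYXS hP0 hXS hYS s₀ (hS _)]
    _ ≤ _ := add_le_add_right (sum_margXS_mul_TV_tiltRule_tilt_le hP0 hXS hYS hL hU s₀) _

end Tilt

theorem generalized_rhoTV_fair_optimal_inductive_bias_general
    (P : 𝒳 → 𝒴 → 𝒮 → ℝ)
    (hP0 : ∀ x y s, 0 ≤ P x y s)
    (hP1 : ∑ x, ∑ y, ∑ s, P x y s = 1)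
    (hXS : ∀ x s, 0 < margXS P x s)
    (hYS : ∀ y s, 0 < margYS P y s)
    (φL φU : 𝒳 → 𝒴 → ℝ)
    (hL : ∀ x y s, φL x y ≤ condRatio P x y s)
    (hU : ∀ x y s, condRatio P x y s ≤ φU x y)
    (smax : 𝒮) (δ : ℝ) (hδ : 0 < δ) (hsmax : margS P smax = 1 / 2 + δ)
    (ε : ℝ)
    (hΔ : ∑ x, ∑ y, margX P x * condYS P smax y * (φU x y - φL x y) ≤ ε / 2)
    (Q : 𝒳 → 𝒮 → 𝒴 → ℝ)
    (hfair : rhoTV P Q ≤ ε)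
    (hopt : ∀ Q' : 𝒳 → 𝒮 → 𝒴 → ℝ, IsRule Q' → rhoTV P Q' ≤ ε →
      objective P Q ≤ objective P Q') :
    ∑ s, margS P s * TV (condYhatS P Q s) (condYS P smax)
      ≤ 2 * ε * (1 + 1 / (2 * δ)) := by
  classical
  obtain ⟨x, -, -⟩ := exists_ne_zero_of_sum_ne_zero (s := univ) (f := fun x => margXS P x smax)
    (by rw [← margS, hsmax]; positivity)
  have hS : ∀ s, 0 < margS P s := margS_pos hXS x
  have hS1 := sum_margS hP1
  have hw : ∀ s, 0 ≤ margS P s := fun s => (hS s).le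
  have hfeas : rhoTV P (tiltRule P smax) ≤ ε := by
    have hclose := sum_margS_mul_TV_condYhatS_tiltRule_le hP0 hXS hYS hS hL hU smax
    have hclose0 := sum_nonneg fun s (_ : s ∈ univ) =>
      mul_nonneg (hw s) (TV_nonneg (condYhatS P (tiltRule P smax) s) (condYS P smax))
    linarith [rhoTV_le_two_mul hS hS1 (tiltRule P smax) (condYS P smax)]
  have hcompare := (sum_margS_mul_TV_condYhatS_condYS_le_objective hXS hS Q).trans
    ((hopt _ (tiltRule_isRule hP0 hXS hYS smax) hfeas).trans
      (objective_tiltRule_le hP0 hXS hYS hS hL hU smax))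
  have hsplit := sum_mul_TV_add_two_mul_TV_le hw (condYhatS P Q) (condYS P) smax
  have hrho := sum_mul_TV_le_sum_mul_TV_add hw hS1 (by linarith : 1 / 2 ≤ margS P smax)
    (condYhatS P Q) (margYhat P Q) (condYS P smax)
  set T := TV (condYhatS P Q smax) (condYS P smax)
  have hT0 : 0 ≤ T := TV_nonneg _ _
  change _ ≤ rhoTV P Q + T at hrho
  rw [hsmax] at hsplit
  have hδT : δ * T ≤ 5 / 8 * ε := by linarith
  have hε : 0 ≤ ε := by linarith [mul_nonneg hδ.le hT0]
  have hT : T ≤ ε / δ := by rw [le_div_iff₀ hδ]; linarith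
  rw [show 2 * ε * (1 + 1 / (2 * δ)) = 2 * ε + ε / δ by field_simp]
  linarith

/-- **Theorem 4.** In the generalized fair learning problem with the TV-based dependence
measure, if `φ_L(x,y) ≤ P(x|y,s)/P(x|s) ≤ φ_U(x,y)`, `Δ = φ_U - φ_L` satisfies
`ε/2 ≥ E_{P_X P_{Y|S=s_max}}[Δ]`, and `P_S(s_max) = 1/2 + δ` with `δ > 0`, then any
optimal solution among rules with `ρ_TV(Ŷ, S) ≤ ε` satisfies
`E_{s∼P_S}[TV(P_{Ŷ|S=s}, P_{Y|S=s_max})] ≤ 2ε (1 + 1/(2δ))`. -/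
theorem generalized_rhoTV_fair_optimal_inductive_bias
    (P : 𝒳 → 𝒴 → 𝒮 → ℝ)
    (hP0 : ∀ x y s, 0 ≤ P x y s)
    (hP1 : ∑ x, ∑ y, ∑ s, P x y s = 1)
    (hXS : ∀ x s, 0 < margXS P x s)
    (hYS : ∀ y s, 0 < margYS P y s)
    (φL φU : 𝒳 → 𝒴 → ℝ)
    (hL : ∀ x y s, φL x y ≤ condRatio P x y s)
    (hU : ∀ x y s, condRatio P x y s ≤ φU x y)
    (smax : 𝒮) (δ : ℝ) (hδ : 0 < δ) (hsmax : margS P smax = 1 / 2 + δ)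
    (ε : ℝ)
    (hΔ : ∑ x, ∑ y, margX P x * condYS P smax y * (φU x y - φL x y) ≤ ε / 2)
    (Q : 𝒳 → 𝒮 → 𝒴 → ℝ) (hQ : IsRule Q)
    (hfair : rhoTV P Q ≤ ε)
    (hopt : ∀ Q' : 𝒳 → 𝒮 → 𝒴 → ℝ, IsRule Q' → rhoTV P Q' ≤ ε →
      objective P Q ≤ objective P Q') :
    ∑ s, margS P s * TV (condYhatS P Q s) (condYS P smax)
      ≤ 2 * ε * (1 + 1 / (2 * δ)) :=
  generalized_rhoTV_fair_optimal_inductive_bias_general P hP0 hP1 hXS hYS φL φU hL hU smax δ hδ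
    hsmax ε hΔ Q hfair hopt
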